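/- arXiv:2204.01990 — 5 statements merged into one kernel-verified Lean document; each statement's English description precedes it below -/
import Mathlib

section
/- Let p be a prime and A a finite abelian p-group. If B is a nontrivial subgroup of A, then the type of the quotient A/B is strictly smaller than the type of A: writing the type of A as (k_1,…,k_n) and the type of A/B as (ℓ_1,…,ℓ_m), one has m ≤ n, ℓ_i ≤ k_i for all 1 ≤ i ≤ m, and (ℓ_1,…,ℓ_m) ≠ (k_1,…,k_n). -/
/-- Cardinality of the image of multiplication by `p ^ j` on `ZMod (p ^ a)`. -/
lemma aux_zmod_card (p : ℕ) (hp : p.Prime) (a j : ℕ) :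
    Nat.card ((nsmulAddMonoidHom (p ^ j) : ZMod (p ^ a) →+ ZMod (p ^ a)).range)
      = p ^ (a - j) := by
  haveI : NeZero (p ^ a) := ⟨pow_ne_zero a hp.ne_zero⟩
  have hrange : (nsmulAddMonoidHom (p ^ j) : ZMod (p ^ a) →+ ZMod (p ^ a)).range
      = AddSubgroup.zmultiples ((p ^ j : ℕ) : ZMod (p ^ a)) := by
    ext y
    simp only [AddMonoidHom.mem_range, nsmulAddMonoidHom_apply,
      AddSubgroup.mem_zmultiples_iff]
    constructor
    · rintro ⟨x, rfl⟩
      refine ⟨(x.val : ℤ), ?_⟩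
      have hx : ((x.val : ℤ) : ZMod (p ^ a)) = x := by
        rw [Int.cast_natCast]; exact ZMod.natCast_rightInverse x
      rw [zsmul_eq_mul, hx, nsmul_eq_mul, mul_comm]
    · rintro ⟨z, rfl⟩
      refine ⟨(z : ZMod (p ^ a)), ?_⟩
      rw [nsmul_eq_mul, zsmul_eq_mul, mul_comm]
  rw [hrange, Nat.card_zmultiples, ZMod.addOrderOf_coe _ (NeZero.ne _)]
  rcases le_total j a with h | h
  · rw [Nat.gcd_eq_right (pow_dvd_pow p h), Nat.pow_div h hp.pos]
  · rw [Nat.gcd_eq_left (pow_dvd_pow p h), Nat.div_self (pow_pos hp.pos a),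
      Nat.sub_eq_zero_of_le h, pow_zero]

/-- Image of multiplication by `N` on a finite product is the product of images. -/
lemma aux_pi_card {ι : Type} [Fintype ι] (M : ι → Type) [∀ i, AddCommGroup (M i)] (N : ℕ) :
    Nat.card ((nsmulAddMonoidHom N : (∀ i, M i) →+ (∀ i, M i)).range)
      = ∏ i, Nat.card ((nsmulAddMonoidHom N : M i →+ M i).range) := by
  rw [← Nat.card_pi]
  apply Nat.card_congr
  refine ⟨fun x i => ⟨x.1 i, ?_⟩, fun g => ⟨fun i => (g i).1, ?_⟩, fun x => rfl,
    fun g => funext fun i => Subtype.ext rfl⟩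
  · obtain ⟨y, hy⟩ := x.2
    exact ⟨y i, by rw [← hy]; rfl⟩
  · have h := fun i => (g i).2
    choose y hy using h
    refine ⟨y, funext fun i => ?_⟩
    simpa using hy i

/-- Key inequality: for a surjection of finite abelian groups, the relative sizes of
successive multiplication images behave monotonically. -/
lemma aux_surj_card {G H : Type} [AddCommGroup G] [AddCommGroup H] [Finite G]
    (f : G →+ H) (hf : Function.Surjective f) (N q : ℕ) :
    Nat.card ((nsmulAddMonoidHom N : H →+ H).range) *
        Nat.card ((nsmulAddMonoidHom (N * q) : G →+ G).range) ≤
      Nat.card ((nsmulAddMonoidHom N : G →+ G).range) *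
        Nat.card ((nsmulAddMonoidHom (N * q) : H →+ H).range) := by
  haveI : Finite H := Finite.of_surjective f hf
  have key : ∀ M : ℕ,
      Nat.card ((nsmulAddMonoidHom M : G →+ G).range) =
        Nat.card ((nsmulAddMonoidHom M : H →+ H).range) *
          Nat.card ((f.comp ((nsmulAddMonoidHom M : G →+ G).range.subtype)).ker) := by
    intro M
    set g := f.comp ((nsmulAddMonoidHom M : G →+ G).range.subtype) with hg
    have h1 := AddSubgroup.card_eq_card_quotient_mul_card_addSubgroup g.ker
    have h2 : Nat.card (↥((nsmulAddMonoidHom M : G →+ G).range) ⧸ g.ker)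
        = Nat.card g.range :=
      Nat.card_congr (QuotientAddGroup.quotientKerEquivRange g).toEquiv
    have h3 : g.range = (nsmulAddMonoidHom M : H →+ H).range := by
      ext y
      simp only [hg, AddMonoidHom.mem_range, AddMonoidHom.coe_comp, Function.comp_apply,
        AddSubgroup.coe_subtype, nsmulAddMonoidHom_apply]
      constructor
      · rintro ⟨⟨x, hx⟩, rfl⟩
        obtain ⟨z, rfl⟩ := hx
        exact ⟨f z, by simp [map_nsmul]⟩
      · rintro ⟨h', rfl⟩
        obtain ⟨z, rfl⟩ := hf h'
        exact ⟨⟨M • z, ⟨z, rfl⟩⟩, by simp [map_nsmul]⟩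
    rw [h1, h2, h3]
  have hle : ((nsmulAddMonoidHom (N * q) : G →+ G).range : AddSubgroup G)
      ≤ (nsmulAddMonoidHom N : G →+ G).range := by
    rintro x ⟨y, rfl⟩
    exact ⟨q • y, by simp [mul_smul]⟩
  have hker : Nat.card ((f.comp ((nsmulAddMonoidHom (N * q) : G →+ G).range.subtype)).ker)
      ≤ Nat.card ((f.comp ((nsmulAddMonoidHom N : G →+ G).range.subtype)).ker) := by
    refine Nat.card_le_card_of_injective
      (fun x => ⟨⟨x.1.1, hle x.1.2⟩, by
        have hx := x.2
        simp only [AddMonoidHom.mem_ker, AddMonoidHom.coe_comp, Function.comp_apply,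
          AddSubgroup.coe_subtype] at hx ⊢
        exact hx⟩) ?_
    intro a b h
    apply Subtype.ext
    apply Subtype.ext
    exact congrArg (fun t => (t.1.1 : G)) h
  rw [key N, key (N * q)]
  set a := Nat.card ((nsmulAddMonoidHom N : H →+ H).range)
  set b := Nat.card ((nsmulAddMonoidHom (N * q) : H →+ H).range)
  set kN := Nat.card ((f.comp ((nsmulAddMonoidHom N : G →+ G).range.subtype)).ker)
  set kM := Nat.card ((f.comp ((nsmulAddMonoidHom (N * q) : G →+ G).range.subtype)).ker)
  calc a * (b * kM) = a * b * kM := (mul_assoc _ _ _).symm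
    _ ≤ a * b * kN := Nat.mul_le_mul_left _ hker
    _ = a * kN * b := by ring

lemma aux_dec {N : ℕ} (g : Fin N → ℕ) (j : ℕ) :
    ∑ i, (g i - j) = (∑ i, (g i - (j + 1)))
      + (Finset.univ.filter (fun i => j < g i)).card := by
  rw [Finset.card_filter, ← Finset.sum_add_distrib]
  refine Finset.sum_congr rfl fun i _ => ?_
  split_ifs with h <;> omega

/-- Let `p` be a prime and `A` a finite abelian `p`-group of type
`(k 0, …, k (n-1))`.  If `B` is a nontrivial subgroup of `A` and the quotient `A ⧸ B`
has type `(l 0, …, l (m-1))`, then the type of `A ⧸ B` is strictly smaller than the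
type of `A`: `m ≤ n`, `l i ≤ k i` for all `i < m`, and the two tuples are distinct. -/
theorem type_strict_mono_of_quotient
    (p : ℕ) (hp : p.Prime) (A : Type) [AddCommGroup A] [Fintype A]
    (n m : ℕ) (k : Fin n → ℕ) (l : Fin m → ℕ)
    (hk : Antitone k) (hk1 : ∀ i, 1 ≤ k i)
    (hl : Antitone l) (hl1 : ∀ i, 1 ≤ l i)
    (hA : Nonempty (A ≃+ ((i : Fin n) → ZMod (p ^ k i))))
    (B : AddSubgroup A) (hB : B ≠ ⊥)
    (hQiso : Nonempty ((A ⧸ B) ≃+ ((i : Fin m) → ZMod (p ^ l i)))) :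
    m ≤ n ∧ (∀ (i : ℕ) (him : i < m) (hin : i < n), l ⟨i, him⟩ ≤ k ⟨i, hin⟩) ∧
      List.ofFn l ≠ List.ofFn k := by
  obtain ⟨ea⟩ := hA
  obtain ⟨eq'⟩ := hQiso
  haveI : Finite ((i : Fin n) → ZMod (p ^ k i)) := Finite.of_equiv A ea.toEquiv
  set f : ((i : Fin n) → ZMod (p ^ k i)) →+ ((i : Fin m) → ZMod (p ^ l i)) :=
    (eq'.toAddMonoidHom.comp (QuotientAddGroup.mk' B)).comp ea.symm.toAddMonoidHom with hfdef
  have hf : Function.Surjective f := by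
    simp only [hfdef, AddMonoidHom.coe_comp]
    exact ((eq'.surjective.comp (QuotientAddGroup.mk'_surjective B)).comp
      ea.symm.surjective)
  -- key filtered-count inequality
  have hsum : ∀ j : ℕ, (∑ i, (l i - j)) + (∑ i, (k i - (j + 1)))
      ≤ (∑ i, (k i - j)) + (∑ i, (l i - (j + 1))) := by
    intro j
    have H := aux_surj_card f hf (p ^ j) p
    rw [← pow_succ] at H
    rw [aux_pi_card, aux_pi_card, aux_pi_card, aux_pi_card] at H
    simp_rw [aux_zmod_card p hp] at H
    rw [Finset.prod_pow_eq_pow_sum, Finset.prod_pow_eq_pow_sum,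
      Finset.prod_pow_eq_pow_sum, Finset.prod_pow_eq_pow_sum, ← pow_add, ← pow_add] at H
    exact (Nat.pow_le_pow_iff_right hp.one_lt).mp H
  have key : ∀ j : ℕ, (Finset.univ.filter (fun i : Fin m => j < l i)).card
      ≤ (Finset.univ.filter (fun i : Fin n => j < k i)).card := by
    intro j
    have h1 := hsum j
    rw [aux_dec l j, aux_dec k j] at h1
    omega
  have hmn : m ≤ n := by
    have h0 := key 0
    have h1 : (Finset.univ.filter (fun i : Fin m => 0 < l i)) = Finset.univ :=
      Finset.filter_true_of_mem fun i _ => hl1 i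
    rw [h1, Finset.card_univ, Fintype.card_fin] at h0
    exact h0.trans ((Finset.card_filter_le _ _).trans (by simp))
  refine ⟨hmn, ?_, ?_⟩
  · intro i him hin
    by_contra hlt
    push_neg at hlt
    set j := k ⟨i, hin⟩ with hj
    have h1 : i + 1 ≤ (Finset.univ.filter (fun i' : Fin m => j < l i')).card := by
      have hsub : Finset.Iic (⟨i, him⟩ : Fin m)
          ⊆ Finset.univ.filter (fun i' : Fin m => j < l i') := by
        intro x hx
        rw [Finset.mem_Iic] at hx
        simp only [Finset.mem_filter, Finset.mem_univ, true_and]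
        exact lt_of_lt_of_le hlt (hl hx)
      calc i + 1 = (Finset.Iic (⟨i, him⟩ : Fin m)).card := by rw [Fin.card_Iic]
        _ ≤ _ := Finset.card_le_card hsub
    have h2 : (Finset.univ.filter (fun i' : Fin n => j < k i')).card ≤ i := by
      have hsub : Finset.univ.filter (fun i' : Fin n => j < k i')
          ⊆ Finset.Iio (⟨i, hin⟩ : Fin n) := by
        intro x hx
        simp only [Finset.mem_filter, Finset.mem_univ, true_and] at hx
        rw [Finset.mem_Iio]
        by_contra hxi
        push_neg at hxi
        exact absurd (hk hxi) (not_le.mpr hx)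
      calc (Finset.univ.filter (fun i' : Fin n => j < k i')).card
          ≤ (Finset.Iio (⟨i, hin⟩ : Fin n)).card := Finset.card_le_card hsub
        _ = i := Fin.card_Iio _
    have := key j
    omega
  · -- strictness from cardinality
    have cardA : Nat.card A = p ^ ∑ i, k i := by
      rw [Nat.card_congr ea.toEquiv, Nat.card_pi]
      simp_rw [Nat.card_zmod]
      exact Finset.prod_pow_eq_pow_sum _ _ _
    have cardQ : Nat.card (A ⧸ B) = p ^ ∑ i, l i := by
      rw [Nat.card_congr eq'.toEquiv, Nat.card_pi]
      simp_rw [Nat.card_zmod]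
      exact Finset.prod_pow_eq_pow_sum _ _ _
    have hBcard : 1 < Nat.card B := (AddSubgroup.one_lt_card_iff_ne_bot B).mpr hB
    have hAB : Nat.card A = Nat.card (A ⧸ B) * Nat.card B :=
      AddSubgroup.card_eq_card_quotient_mul_card_addSubgroup B
    have h0 : 0 < Nat.card (A ⧸ B) := Nat.card_pos
    have hltc : Nat.card (A ⧸ B) < Nat.card A := by nlinarith
    rw [cardA, cardQ] at hltc
    have hlts : ∑ i, l i < ∑ i, k i :=
      (Nat.pow_lt_pow_iff_right hp.one_lt).mp hltc
    intro h
    have hs : (List.ofFn l).sum = (List.ofFn k).sum := by rw [h]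
    rw [List.sum_ofFn, List.sum_ofFn] at hs
    omega
end

section
/- Let p > 2 be a prime and α = (ℓ_1,…,ℓ_m) a type, with A(α) = ∏_{i=1}^m ℤ/p^{ℓ_i}ℤ. If {z_1,…,z_r} is a minimal generating set for A(α) whose element z_i has order p^{d_i}, where ℓ_1 = d_1 ≥ d_2 ≥ ⋯ ≥ d_r ≥ 1, then r = m and d_i ≥ ℓ_i for all 1 ≤ i ≤ m. -/
private lemma spanZMod_toAddSubgroup {n : ℕ} {M : Type*} [AddCommGroup M] [Module (ZMod n) M]
    (S : Set M) : (Submodule.span (ZMod n) S).toAddSubgroup = AddSubgroup.closure S := by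
  refine le_antisymm ?_ ((AddSubgroup.closure_le _).2 Submodule.subset_span)
  intro x hx
  have h : Submodule.span (ZMod n) S ≤ AddSubgroup.toZModSubmodule n (AddSubgroup.closure S) :=
    Submodule.span_le.2 (by simpa using AddSubgroup.subset_closure (k := S))
  exact h hx

private lemma span_eq_top_of_closure {n : ℕ} {M : Type*} [AddCommGroup M] [Module (ZMod n) M]
    {S : Set M} (h : AddSubgroup.closure S = ⊤) : Submodule.span (ZMod n) S = ⊤ := by
  have h2 := spanZMod_toAddSubgroup (n := n) S
  rw [h] at h2
  rw [eq_top_iff]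
  intro x _
  have hx : x ∈ (Submodule.span (ZMod n) S).toAddSubgroup := by rw [h2]; trivial
  exact hx

private lemma span_bound {K : Type*} [Field K] {s r : ℕ} (i : ℕ) (w : Fin r → (Fin s → K))
    (hw : Submodule.span K (Set.range w) = ⊤)
    (hzero : ∀ j : Fin r, i ≤ (j : ℕ) → w j = 0) : s ≤ i := by
  classical
  set S : Finset (Fin s → K) := (Finset.univ.filter fun j : Fin r => (j : ℕ) < i).image w with hS
  have hsub : Set.range w ⊆ insert 0 (S : Set (Fin s → K)) := by
    rintro _ ⟨j, rfl⟩
    by_cases hj : (j : ℕ) < i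
    · exact Set.mem_insert_iff.2 <| Or.inr <| Finset.mem_coe.2 <|
        Finset.mem_image.2 ⟨j, Finset.mem_filter.2 ⟨Finset.mem_univ _, hj⟩, rfl⟩
    · exact Set.mem_insert_iff.2 <| Or.inl (hzero j (le_of_not_gt hj))
  have htop : Submodule.span K (S : Set (Fin s → K)) = ⊤ := by
    refine le_antisymm le_top ?_
    rw [← hw]
    calc Submodule.span K (Set.range w)
        ≤ Submodule.span K (insert 0 (S : Set (Fin s → K))) := Submodule.span_mono hsub
      _ = Submodule.span K (S : Set (Fin s → K)) := Submodule.span_insert_zero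
  have h1 : s ≤ S.card := by
    have h2 := finrank_span_le_card (R := K) (S : Set (Fin s → K))
    rw [htop] at h2
    simpa [Module.finrank_pi] using h2
  have h2 : S.card ≤ i := by
    refine le_trans Finset.card_image_le ?_
    calc (Finset.univ.filter fun j : Fin r => (j : ℕ) < i).card
        ≤ (Finset.range i).card := Finset.card_le_card_of_injOn (fun j : Fin r => (j : ℕ))
          (fun a ha => Finset.mem_range.2 (Finset.mem_filter.1 ha).2)
          (fun a _ b _ h => Fin.val_injective h)
      _ = i := Finset.card_range i
  omega

private lemma zmod_cast_eq_zero_of_nsmul {e k : ℕ} {p : ℕ} (hp : p.Prime) (hk : k < e)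
    {x : ZMod (p ^ e)} (hx : p ^ k • x = 0) :
    ZMod.castHom (dvd_pow_self p (by omega : e ≠ 0)) (ZMod p) x = 0 := by
  haveI : NeZero (p ^ e) := ⟨pow_ne_zero _ hp.pos.ne'⟩
  have hx' : ((p ^ k * x.val : ℕ) : ZMod (p ^ e)) = 0 := by
    rw [Nat.cast_mul, ZMod.natCast_zmod_val, ← nsmul_eq_mul]
    exact hx
  have hdvd : p ^ e ∣ p ^ k * x.val := (ZMod.natCast_eq_zero_iff _ _).1 hx'
  have hdvd2 : p ^ k * p ∣ p ^ k * x.val := by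
    calc p ^ k * p = p ^ (k + 1) := (pow_succ p k).symm
      _ ∣ p ^ e := pow_dvd_pow p (by omega)
      _ ∣ p ^ k * x.val := hdvd
  have hpx : p ∣ x.val := (Nat.mul_dvd_mul_iff_left (pow_pos hp.pos k)).1 hdvd2
  rw [show x = ((x.val : ℕ) : ZMod (p ^ e)) from (ZMod.natCast_zmod_val x).symm, map_natCast]
  exact (ZMod.natCast_eq_zero_iff _ _).2 hpx

private lemma exists_of_cast_eq_zero {e : ℕ} {p : ℕ} (hp : p.Prime) (he : e ≠ 0)
    {x : ZMod (p ^ e)} (hx : ZMod.castHom (dvd_pow_self p he) (ZMod p) x = 0) :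
    ∃ y : ZMod (p ^ e), x = p • y := by
  haveI : NeZero (p ^ e) := ⟨pow_ne_zero _ hp.pos.ne'⟩
  rw [show x = ((x.val : ℕ) : ZMod (p ^ e)) from (ZMod.natCast_zmod_val x).symm,
    map_natCast] at hx
  obtain ⟨c, hc⟩ := (ZMod.natCast_eq_zero_iff _ _).1 hx
  refine ⟨(c : ZMod (p ^ e)), ?_⟩
  rw [← ZMod.natCast_zmod_val x, hc, Nat.cast_mul, nsmul_eq_mul]

/-- Let `p > 2` be a prime and `α = (l 0, …, l (m-1))` a type
(weakly decreasing positive entries), with `A(α) = ∏ i, ℤ/p^(l i)ℤ`.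
If `{z 0, …, z (r-1)}` is a minimal generating set for `A(α)` (it generates, and no
proper subset of it generates), where `z i` has order `p ^ d i` and
`l 0 = d 0 ≥ d 1 ≥ ⋯ ≥ d (r-1) ≥ 1`, then `r = m` and `d i ≥ l i` for all `i`. -/
theorem minimal_generating_set_orders
    (p : ℕ) (hp : p.Prime) (hp2 : 2 < p)
    (m : ℕ) (hm : 0 < m) (l : Fin m → ℕ) (hl : Antitone l) (hl1 : ∀ i, 1 ≤ l i)
    (r : ℕ) (hr : 0 < r) (z : Fin r → ((i : Fin m) → ZMod (p ^ l i)))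
    (hinj : Function.Injective z)
    (hgen : AddSubgroup.closure (Set.range z) = ⊤)
    (hmin : ∀ T : Set ((i : Fin m) → ZMod (p ^ l i)),
      T ⊂ Set.range z → AddSubgroup.closure T ≠ ⊤)
    (d : Fin r → ℕ) (hd : Antitone d) (hd1 : ∀ i, 1 ≤ d i)
    (hdl : d ⟨0, hr⟩ = l ⟨0, hm⟩)
    (hord : ∀ i, addOrderOf (z i) = p ^ d i) :
    r = m ∧ ∀ (i : ℕ) (hir : i < r) (him : i < m), l ⟨i, him⟩ ≤ d ⟨i, hir⟩ := by
  classical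
  haveI : Fact p.Prime := ⟨hp⟩
  haveI : ∀ i : Fin m, NeZero (p ^ l i) := fun i => ⟨pow_ne_zero _ hp.pos.ne'⟩
  have hl0 : ∀ i : Fin m, l i ≠ 0 := fun i => by have := hl1 i; omega
  -- the reduction-mod-p projection
  let π : ((i : Fin m) → ZMod (p ^ l i)) →+ (Fin m → ZMod p) :=
    { toFun := fun a t => ZMod.castHom (dvd_pow_self p (hl0 t)) (ZMod p) (a t)
      map_zero' := by funext t; simp only [Pi.zero_apply, map_zero]
      map_add' := by intro a b; funext t; simp only [Pi.add_apply, map_add] }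
  have hπa : ∀ (a : (i : Fin m) → ZMod (p ^ l i)) (t : Fin m),
      π a t = ZMod.castHom (dvd_pow_self p (hl0 t)) (ZMod p) (a t) := fun a t => rfl
  have hπs : Function.Surjective π := by
    intro v
    refine ⟨fun t => ((v t).val : ZMod (p ^ l t)), ?_⟩
    funext t
    rw [hπa, map_natCast, ZMod.natCast_zmod_val]
  -- generic spanning fact
  have hspan : ∀ {s : ℕ} (f : ((i : Fin m) → ZMod (p ^ l i)) →+ (Fin s → ZMod p)), Function.Surjective f →
      Submodule.span (ZMod p) (Set.range (⇑f ∘ z)) = ⊤ := by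
    intro s f hf
    apply span_eq_top_of_closure
    rw [Set.range_comp, ← AddMonoidHom.map_closure, hgen]
    exact AddSubgroup.map_top_of_surjective f hf
  -- r ≤ m via linear independence of π ∘ z
  have hrm : r ≤ m := by
    have hli : LinearIndependent (ZMod p) (⇑π ∘ z) := by
      rw [linearIndependent_iff_notMem_span]
      intro i hmem
      set T : Set ((i : Fin m) → ZMod (p ^ l i)) := z '' (Set.univ \ {i}) with hT
      have hTsub : T ⊂ Set.range z := by
        constructor
        · rintro _ ⟨j, _, rfl⟩; exact ⟨j, rfl⟩
        · intro hcon
          obtain ⟨j, hj, hji⟩ := hcon ⟨i, rfl⟩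
          exact hj.2 (Set.mem_singleton_iff.2 (hinj hji))
      refine hmin T hTsub ?_
      set H := AddSubgroup.closure T with hH
      -- one step of Nakayama
      have step : ∀ a : ((i : Fin m) → ZMod (p ^ l i)), ∃ h ∈ H, ∃ b : ((i : Fin m) → ZMod (p ^ l i)), a = h + p • b := by
        intro a
        have h2 : Submodule.span (ZMod p) (Set.range (⇑π ∘ z)) = ⊤ := hspan π hπs
        have huniv : (Set.univ : Set (Fin r)) = insert i (Set.univ \ {i}) := by
          rw [Set.insert_diff_singleton, Set.insert_eq_self.2 (Set.mem_univ i)]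
        have h3 : Set.range (⇑π ∘ z)
            = insert ((⇑π ∘ z) i) ((⇑π ∘ z) '' (Set.univ \ {i})) := by
          conv_lhs => rw [← Set.image_univ, huniv, Set.image_insert_eq]
        have h4 : Submodule.span (ZMod p) ((⇑π ∘ z) '' (Set.univ \ {i})) = ⊤ := by
          rw [← h2, h3, Submodule.span_insert_eq_span hmem]
        have h5 : (⇑π ∘ z) '' (Set.univ \ {i}) = ⇑π '' T := by
          rw [hT, Set.image_comp]
        have h6 : π a ∈ AddSubgroup.map π H := by
          rw [hH, AddMonoidHom.map_closure, ← spanZMod_toAddSubgroup (n := p),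
            Submodule.mem_toAddSubgroup, ← h5, h4]
          trivial
        obtain ⟨h, hh, hha⟩ := h6
        have h7 : ∀ t : Fin m,
            ZMod.castHom (dvd_pow_self p (hl0 t)) (ZMod p) ((a - h) t) = 0 := by
          intro t
          have : π (a - h) = 0 := by rw [map_sub, hha, sub_self]
          have := congrFun this t
          rwa [hπa] at this
        choose b hb using fun t => exists_of_cast_eq_zero hp (hl0 t) (h7 t)
        refine ⟨h, hh, b, ?_⟩
        funext t
        have := hb t
        simp only [Pi.sub_apply] at this
        rw [Pi.add_apply, Pi.smul_apply]
        linear_combination (norm := module) this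
      -- iterate
      have step2 : ∀ n : ℕ, ∀ a : ((i : Fin m) → ZMod (p ^ l i)), ∃ h ∈ H, ∃ b : ((i : Fin m) → ZMod (p ^ l i)), a = h + p ^ n • b := by
        intro n
        induction n with
        | zero => exact fun a => ⟨0, H.zero_mem, a, by simp⟩
        | succ n ih =>
          intro a
          obtain ⟨h, hh, b, rfl⟩ := ih a
          obtain ⟨h', hh', b', rfl⟩ := step b
          refine ⟨h + p ^ n • h', H.add_mem hh (AddSubgroup.nsmul_mem H hh' _), b', ?_⟩
          rw [smul_add, ← add_assoc, smul_smul, ← pow_succ]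
      rw [eq_top_iff]
      intro a _
      obtain ⟨h, hh, b, rfl⟩ := step2 (l ⟨0, hm⟩) a
      have hb0 : (p ^ l ⟨0, hm⟩ : ℕ) • b = 0 := by
        funext t
        rw [Pi.smul_apply, Pi.zero_apply, nsmul_eq_mul]
        have hdvd : p ^ l t ∣ p ^ l ⟨0, hm⟩ :=
          pow_dvd_pow p (hl (Fin.le_def.2 (Nat.zero_le _)))
        have : ((p ^ l ⟨0, hm⟩ : ℕ) : ZMod (p ^ l t)) = 0 :=
          (ZMod.natCast_eq_zero_iff _ _).2 hdvd
        rw [this, zero_mul]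
      rw [hb0, add_zero]
      exact hh
    have hfin := hli.fintype_card_le_finrank
    simpa [Module.finrank_pi] using hfin
  -- m ≤ r
  have hmr : m ≤ r := by
    refine span_bound r (⇑π ∘ z) (hspan π hπs) ?_
    intro j hj
    exact absurd j.isLt (by omega)
  have hrmeq : r = m := le_antisymm hrm hmr
  refine ⟨hrmeq, ?_⟩
  intro i hir him
  by_contra hcon
  push_neg at hcon
  set k := d ⟨i, hir⟩ with hk
  -- restriction to the first i+1 coordinates
  let ρ : (Fin m → ZMod p) →+ (Fin (i + 1) → ZMod p) :=
    { toFun := fun v t => v ⟨t.1, lt_of_le_of_lt (Nat.lt_succ_iff.1 t.isLt) him⟩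
      map_zero' := rfl
      map_add' := fun _ _ => rfl }
  have hρs : Function.Surjective ρ := by
    intro u
    refine ⟨fun j => if h : j.1 < i + 1 then u ⟨j.1, h⟩ else 0, ?_⟩
    funext t
    simp [ρ]
    intro h; exact absurd t.isLt (by omega)
  set φ := ρ.comp π with hφ
  have hφs : Function.Surjective φ := hρs.comp hπs
  have hw := hspan φ hφs
  have hzero : ∀ j : Fin r, i ≤ (j : ℕ) → (⇑φ ∘ z) j = 0 := by
    intro j hj
    have hdj : d j ≤ k := hd (Fin.le_def.2 hj)
    have hzj : p ^ k • z j = 0 := by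
      have h1 : addOrderOf (z j) ∣ p ^ k := (hord j) ▸ pow_dvd_pow p hdj
      exact addOrderOf_dvd_iff_nsmul_eq_zero.1 h1
    funext t
    have htm : (t : ℕ) < m := lt_of_le_of_lt (Nat.lt_succ_iff.1 t.isLt) him
    have hkl : k < l ⟨t.1, htm⟩ :=
      lt_of_lt_of_le hcon (hl (Fin.le_def.2 (Nat.lt_succ_iff.1 t.isLt)))
    have hc : p ^ k • (z j ⟨t.1, htm⟩) = 0 := by
      have := congrFun hzj ⟨t.1, htm⟩
      simpa using this
    have := zmod_cast_eq_zero_of_nsmul hp hkl hc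
    simpa [φ, ρ, hπa, Function.comp] using this
  have := span_bound i (⇑φ ∘ z) hw hzero
  omega
end

section
/- Let p > 2 be a prime and α = (ℓ_1,…,ℓ_m) a type, with A(α) = ∏_{i=1}^m ℤ/p^{ℓ_i}ℤ. Given integers d_1,…,d_m with ℓ_1 = d_1 ≥ d_2 ≥ ⋯ ≥ d_m ≥ 1 and d_i ≥ ℓ_i for all i, there exists a minimal generating set {z_1,…,z_m} of A(α) such that z_i has order p^{d_i} for every i. -/
/-- Let `p > 2` be a prime and `α = (l 0, …, l (m-1))` a type, with
`A(α) = ∏ i, ℤ/p^(l i)ℤ`.  Given integers `d 0, …, d (m-1)` with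
`l 0 = d 0 ≥ d 1 ≥ ⋯ ≥ d (m-1) ≥ 1` and `d i ≥ l i` for all `i`, there exists a
minimal generating set `{z 0, …, z (m-1)}` of `A(α)` (it generates, and no proper
subset of it generates) with `z i` of order `p ^ d i` for every `i`. -/
theorem exists_minimal_generating_set_with_orders
    (p : ℕ) (hp : p.Prime) (hp2 : 2 < p)
    (m : ℕ) (hm : 0 < m) (l : Fin m → ℕ) (hl : Antitone l) (hl1 : ∀ i, 1 ≤ l i)
    (d : Fin m → ℕ) (hd : Antitone d) (hd1 : ∀ i, 1 ≤ d i)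
    (hdl : d ⟨0, hm⟩ = l ⟨0, hm⟩) (hld : ∀ i, l i ≤ d i) :
    ∃ z : Fin m → ((i : Fin m) → ZMod (p ^ l i)),
      Function.Injective z ∧
      AddSubgroup.closure (Set.range z) = ⊤ ∧
      (∀ T : Set ((i : Fin m) → ZMod (p ^ l i)),
        T ⊂ Set.range z → AddSubgroup.closure T ≠ ⊤) ∧
      ∀ i, addOrderOf (z i) = p ^ d i := by
  classical
  haveI := Fact.mk hp
  set i0 : Fin m := ⟨0, hm⟩ with hi0
  have hple : ∀ i, i0 ≤ i := fun i => by simp [hi0, Fin.le_def]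
  have hdle : ∀ i, d i ≤ l i0 := fun i => hdl ▸ hd (hple i)
  -- basic facts about powers of p in ZMod (p ^ n)
  have hzero : ∀ n k : ℕ, n ≤ k → ((p : ZMod (p ^ n))) ^ k = 0 := by
    intro n k hnk
    rw [← Nat.cast_pow, ZMod.natCast_eq_zero_iff]
    exact pow_dvd_pow p hnk
  have hnonzero : ∀ n k : ℕ, k < n → ((p : ZMod (p ^ n))) ^ k ≠ 0 := by
    intro n k hnk h
    rw [← Nat.cast_pow, ZMod.natCast_eq_zero_iff,
      Nat.pow_dvd_pow_iff_le_right hp.one_lt] at h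
    omega
  have hone_lt : ∀ n : ℕ, 1 ≤ n → 1 < p ^ n := fun n hn =>
    Nat.one_lt_pow (by omega) hp.one_lt
  have hnontriv : ∀ j : Fin m, (1 : ZMod (p ^ l j)) ≠ 0 := by
    intro j
    haveI : Fact (1 < p ^ l j) := Fact.mk (hone_lt _ (hl1 j))
    exact one_ne_zero
  -- the generating family
  set z : Fin m → ((j : Fin m) → ZMod (p ^ l j)) := fun i j =>
    (if j = i then (1 : ZMod (p ^ l j)) else 0) +
      (if j = i0 ∧ j ≠ i then ((p : ZMod (p ^ l j)) ^ (l i0 - d i)) else 0) with hz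
  have hz_self : ∀ i, z i i = 1 := by
    intro i; simp [hz]
  have hz_i0 : ∀ i, z i i0 = (p : ZMod (p ^ l i0)) ^ (l i0 - d i) := by
    intro i
    by_cases h : i = i0
    · subst h
      have h0 : l i0 - d i0 = 0 := by omega
      simp [hz, h0]
    · simp [hz, Ne.symm h]
  have hz_other : ∀ i j, j ≠ i → j ≠ i0 → z i j = 0 := by
    intro i j h1 h2; simp [hz, h1, h2]
  -- injectivity
  have hinj : Function.Injective z := by
    intro a b hab
    by_contra hne
    have key : ∀ a b : Fin m, a ≠ b → a ≠ i0 → z a = z b → False := by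
      intro a b hne ha hzz
      have h1 : z a a = 1 := hz_self a
      have h2 : z b a = 0 := hz_other b a (Ne.symm (Ne.symm hne)) ha
      rw [hzz, h2] at h1
      exact hnontriv a h1.symm
    by_cases ha : a = i0
    · by_cases hb : b = i0
      · exact hne (ha.trans hb.symm)
      · exact key b a (fun h => hne h.symm) hb hab.symm
    · exact key a b hne ha hab
  -- membership facts for closure
  set S := AddSubgroup.closure (Set.range z) with hS
  have hzS : ∀ i, z i ∈ S := fun i =>
    AddSubgroup.subset_closure (Set.mem_range_self i)
  -- the standard basis vectors
  set E : Fin m → ((j : Fin m) → ZMod (p ^ l j)) := fun k j =>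
    if j = k then 1 else 0 with hE
  have hEi0 : E i0 = z i0 := by
    funext j
    by_cases h : j = i0 <;> simp [hE, hz, h]
  have hEi0S : E i0 ∈ S := by rw [hEi0]; exact hzS i0
  have hES : ∀ k, E k ∈ S := by
    intro k
    by_cases h : k = i0
    · rw [h]; exact hEi0S
    · have hrep : E k = z k - (p ^ (l i0 - d k)) • E i0 := by
        funext j
        by_cases h1 : j = k
        · subst h1
          have hji0 : j ≠ i0 := h
          simp [hE, hz, Ne.symm h, hji0]
        · by_cases h2 : j = i0
          · subst h2
            simp only [hE, Pi.sub_apply, Pi.smul_apply, if_pos rfl, if_neg h1]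
            rw [hz_i0 k]
            rw [nsmul_eq_mul]
            push_cast
            simp
          · simp [hE, hz, h1, h2]
      rw [hrep]
      exact sub_mem (hzS k) (AddSubgroup.nsmul_mem S hEi0S _)
  have hgen : S = ⊤ := by
    rw [eq_top_iff]
    intro x _
    have hx : x = ∑ k, (x k).val • E k := by
      funext j
      rw [Finset.sum_apply]
      rw [Finset.sum_eq_single j]
      · haveI : NeZero (p ^ l j) := ⟨(pow_pos hp.pos _).ne'⟩
        simp [hE, smul_eq_mul, ZMod.natCast_zmod_val]
      · intro b _ hb
        simp [hE, Ne.symm hb]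
      · intro h; exact absurd (Finset.mem_univ j) h
    rw [hx]
    exact AddSubgroup.sum_mem S fun k _ => AddSubgroup.nsmul_mem S (hES k) _
  -- minimality
  have hmin : ∀ T : Set ((j : Fin m) → ZMod (p ^ l j)),
      T ⊂ Set.range z → AddSubgroup.closure T ≠ ⊤ := by
    intro T hT hTtop
    obtain ⟨hsub, hne⟩ := hT
    obtain ⟨x, hxr, hxT⟩ := Set.not_subset.mp hne
    obtain ⟨i1, rfl⟩ := hxr
    -- reduction maps
    have hdvd : ∀ j : Fin m, p ∣ p ^ l j := fun j =>
      dvd_pow_self p (Nat.one_le_iff_ne_zero.mp (hl1 j))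
    set cst : ∀ j : Fin m, ZMod (p ^ l j) →+* ZMod p := fun j =>
      ZMod.castHom (hdvd j) (ZMod p) with hcst
    -- build a hom φ vanishing on all z i with i ≠ i1, but φ (z i1) = 1
    have main : ∀ φ : ((j : Fin m) → ZMod (p ^ l j)) →+ ZMod p,
        (∀ i, i ≠ i1 → φ (z i) = 0) → φ (z i1) = 1 → False := by
      intro φ hker hone
      have hTker : T ⊆ (φ.ker : Set _) := by
        intro t ht
        obtain ⟨i, rfl⟩ := hsub ht
        have : i ≠ i1 := fun h => hxT (h ▸ ht)
        exact hker i this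
      have : AddSubgroup.closure T ≤ φ.ker := AddSubgroup.closure_le _ |>.mpr hTker
      rw [hTtop] at this
      have h0 : φ (z i1) = 0 := this (AddSubgroup.mem_top _)
      rw [hone] at h0
      exact one_ne_zero h0
    by_cases h : i1 = i0
    · -- missing z i0 : use φ x = cst i0 (x i0) - ∑ i ≠ i0, p^(l0 - d i) * cst i (x i)
      subst h
      set φ : ((j : Fin m) → ZMod (p ^ l j)) →+ ZMod p :=
        { toFun := fun x => cst i0 (x i0) -
            ∑ i ∈ Finset.univ.erase i0, (p : ZMod p) ^ (l i0 - d i) * cst i (x i),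
          map_zero' := by simp
          map_add' := by
            intro a b
            simp only [Pi.add_apply, map_add, mul_add, Finset.sum_add_distrib]
            ring } with hφ
      apply main φ
      · intro i hi
        have hmem : i ∈ Finset.univ.erase i0 := Finset.mem_erase.mpr ⟨hi, Finset.mem_univ i⟩
        have hsum : ∑ j ∈ Finset.univ.erase i0, (p : ZMod p) ^ (l i0 - d j) * cst j (z i j)
            = (p : ZMod p) ^ (l i0 - d i) := by
          rw [Finset.sum_eq_single i]
          · rw [hz_self i]; simp
          · intro b hb hbi
            have hb0 : b ≠ i0 := (Finset.mem_erase.mp hb).1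
            rw [hz_other i b hbi hb0]
            simp
          · intro h; exact absurd hmem h
        simp only [hφ, AddMonoidHom.coe_mk, ZeroHom.coe_mk, hsum]
        rw [hz_i0 i]
        rw [map_pow, map_natCast]
        ring
      · have hsum : ∑ j ∈ Finset.univ.erase i0, (p : ZMod p) ^ (l i0 - d j) * cst j (z i0 j)
            = 0 := by
          apply Finset.sum_eq_zero
          intro b hb
          have hb0 : b ≠ i0 := (Finset.mem_erase.mp hb).1
          rw [hz_other i0 b hb0 hb0]
          simp
        simp only [hφ, AddMonoidHom.coe_mk, ZeroHom.coe_mk, hsum, hz_self i0]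
        simp
    · -- missing z i1 with i1 ≠ i0 : reduce coordinate i1 mod p
      set φ : ((j : Fin m) → ZMod (p ^ l j)) →+ ZMod p :=
        ((cst i1).toAddMonoidHom.comp
          (Pi.evalAddMonoidHom (fun j => ZMod (p ^ l j)) i1)) with hφ
      apply main φ
      · intro i hi
        have : z i i1 = 0 := hz_other i i1 (fun hh => hi hh.symm) h
        simp [hφ, this]
      · simp [hφ, hz_self i1]
  -- orders
  have horder : ∀ i, addOrderOf (z i) = p ^ d i := by
    intro i
    obtain ⟨n, hn⟩ : ∃ n, d i = n + 1 := ⟨d i - 1, by have := hd1 i; omega⟩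
    rw [hn]
    apply addOrderOf_eq_prime_pow
    · intro hcontra
      have : (p ^ n • z i) i0 = 0 := by rw [hcontra]; rfl
      rw [Pi.smul_apply, hz_i0 i, nsmul_eq_mul, Nat.cast_pow, ← pow_add] at this
      have hexp : n + (l i0 - d i) = l i0 - 1 := by have := hdle i; omega
      rw [hexp] at this
      exact hnonzero (l i0) (l i0 - 1) (by have := hl1 i0; omega) this
    · funext j
      rw [Pi.smul_apply, Pi.zero_apply, nsmul_eq_mul]
      by_cases h1 : j = i
      · subst h1
        rw [hz_self j, mul_one, Nat.cast_pow]
        exact hzero (l j) (n + 1) (by have := hld j; omega)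
      · by_cases h2 : j = i0
        · subst h2
          rw [hz_i0 i, Nat.cast_pow, ← pow_add]
          exact hzero (l i0) (n + 1 + (l i0 - d i)) (by have := hdle i; omega)
        · rw [hz_other i j h1 h2, mul_zero]
  exact ⟨z, hinj, hgen, hmin, horder⟩
end

section
/- Let p > 2 be a prime, τ = (k_1,…,k_n) and α = (ℓ_1,…,ℓ_m) types with α ≤ τ. For every subgroup N of A(τ) = ∏_{j=1}^n ℤ/p^{k_j}ℤ that is isomorphic to A(α) = ∏_{i=1}^m ℤ/p^{ℓ_i}ℤ, the minimal number of generators of the quotient A(τ)/N is at least u^τ_α := max{ j − f^τ_α(j) : 1 ≤ j ≤ n }, where f^τ_α(j) = max({ i ∈ {1,…,m} : ℓ_i ≥ k_j } ∪ {0}). -/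
open AddSubgroup Finset

/-- scalar multiplication by `c` as an additive monoid hom -/
def sm (c : ℕ) (X : Type*) [AddCommGroup X] : X →+ X where
  toFun x := c • x
  map_zero' := smul_zero c
  map_add' a b := smul_add c a b

lemma sm_apply (c : ℕ) {X : Type*} [AddCommGroup X] (x : X) : sm c X x = c • x := rfl

lemma card_range_sm_zmod (c q : ℕ) (hq : q ≠ 0) :
    Nat.card (sm c (ZMod q)).range = q / q.gcd c := by
  have h : (sm c (ZMod q)).range = AddSubgroup.zmultiples (c : ZMod q) := by
    ext y
    simp only [AddMonoidHom.mem_range, AddSubgroup.mem_zmultiples_iff]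
    constructor
    · rintro ⟨x, rfl⟩
      obtain ⟨z, rfl⟩ := ZMod.intCast_surjective x
      exact ⟨z, by rw [sm_apply, zsmul_eq_mul, nsmul_eq_mul, mul_comm]⟩
    · rintro ⟨z, rfl⟩
      exact ⟨(z : ZMod q), by rw [sm_apply, zsmul_eq_mul, nsmul_eq_mul, mul_comm]⟩
  rw [h, Nat.card_zmultiples, ZMod.addOrderOf_coe c hq]

lemma card_range_sm_zmod_pp (p e kk : ℕ) (hp : p.Prime) :
    Nat.card (sm (p ^ e) (ZMod (p ^ kk))).range = p ^ (kk - min kk e) := by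
  rw [card_range_sm_zmod _ _ (pow_ne_zero _ hp.ne_zero)]
  have hg : (p ^ kk).gcd (p ^ e) = p ^ min kk e := by
    rcases le_total kk e with h | h
    · rw [min_eq_left h, Nat.gcd_eq_left (pow_dvd_pow p h)]
    · rw [min_eq_right h, Nat.gcd_eq_right (pow_dvd_pow p h)]
  rw [hg, Nat.pow_div (min_le_left _ _) hp.pos]

lemma card_range_sm_pi {ι : Type} [Fintype ι] (c : ℕ) (X : ι → Type) [∀ i, AddCommGroup (X i)] :
    Nat.card (sm c ((i : ι) → X i)).range = ∏ i, Nat.card (sm c (X i)).range := by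
  have e : ((sm c ((i : ι) → X i)).range) ≃ ((i : ι) → (sm c (X i)).range) :=
    { toFun := fun y i => ⟨y.1 i, by
        obtain ⟨x, hx⟩ := AddMonoidHom.mem_range.mp y.2
        exact AddMonoidHom.mem_range.mpr ⟨x i, congrFun hx i⟩⟩
      invFun := fun v => ⟨fun i => (v i).1, by
        choose x hx using fun i => AddMonoidHom.mem_range.mp (v i).2
        exact AddMonoidHom.mem_range.mpr ⟨x, funext hx⟩⟩
      left_inv := fun y => Subtype.ext rfl
      right_inv := fun v => funext fun i => Subtype.ext rfl }
  rw [Nat.card_congr e, Nat.card_pi]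

lemma card_eq_range_mul_ker {α β : Type*} [AddCommGroup α] [AddCommGroup β] [Finite α]
    (f : α →+ β) : Nat.card α = Nat.card f.range * Nat.card f.ker := by
  rw [AddSubgroup.card_eq_card_quotient_mul_card_addSubgroup f.ker]
  congr 1
  exact Nat.card_congr (QuotientAddGroup.quotientKerEquivRange f).toEquiv

lemma card_map_sm {X Y : Type*} [AddCommGroup X] [AddCommGroup Y] [Finite X]
    (c : ℕ) (N : AddSubgroup X) (e : N ≃+ Y) :
    Nat.card (N.map (sm c X)) = Nat.card (sm c Y).range := by
  haveI : Finite Y := Finite.of_equiv _ e.toEquiv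
  set h : ↥N →+ X := (sm c X).comp N.subtype with hh
  set g : ↥N →+ Y := (sm c Y).comp e.toAddMonoidHom with hg
  have h1 : N.map (sm c X) = h.range := by
    ext y
    simp only [AddSubgroup.mem_map, AddMonoidHom.mem_range, hh, AddMonoidHom.comp_apply,
      AddSubgroup.coe_subtype]
    constructor
    · rintro ⟨x, hx, rfl⟩; exact ⟨⟨x, hx⟩, rfl⟩
    · rintro ⟨ν, rfl⟩; exact ⟨↑ν, ν.2, rfl⟩
  have h2 : g.range = (sm c Y).range := by
    ext y
    simp only [AddMonoidHom.mem_range, hg, AddMonoidHom.comp_apply]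
    constructor
    · rintro ⟨ν, rfl⟩; exact ⟨e ν, rfl⟩
    · rintro ⟨x, rfl⟩
      exact ⟨e.symm x, by simp⟩
  have hker : h.ker = g.ker := by
    ext ν
    simp only [AddMonoidHom.mem_ker, hh, hg, AddMonoidHom.comp_apply, sm_apply,
      AddSubgroup.coe_subtype, AddEquiv.coe_toAddMonoidHom]
    constructor
    · intro hz
      have hc : c • ν = 0 := by
        apply Subtype.ext
        simpa using hz
      rw [← map_nsmul, hc, map_zero]
    · intro hz
      have hc : c • ν = 0 := by
        apply e.injective
        rw [← map_nsmul] at hz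
        rw [hz, map_zero]
      have := congrArg (N.subtype) hc
      simpa using this
  have c1 := card_eq_range_mul_ker h
  have c2 := card_eq_range_mul_ker g
  rw [hker] at c1
  rw [h1, ← h2]
  have hk0 : 0 < Nat.card g.ker := Nat.card_pos
  exact Nat.eq_of_mul_eq_mul_right hk0 (c1.symm.trans c2)

lemma card_le_sup_succ {m : ℕ} (S : Finset (Fin m)) :
    S.card ≤ S.sup (fun i => (i : ℕ) + 1) := by
  rw [← Finset.card_image_of_injective S Fin.val_injective]
  have hsub : S.image Fin.val ⊆ Finset.range (S.sup fun i => (i : ℕ) + 1) := by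
    intro x hx
    simp only [Finset.mem_image] at hx
    obtain ⟨i, hi, rfl⟩ := hx
    exact Finset.mem_range.mpr (lt_of_lt_of_le (Nat.lt_succ_self _) (Finset.le_sup (f := fun i : Fin m => (i : ℕ) + 1) hi))
  simpa using Finset.card_le_card hsub

/-- The minimal number of generators of an additive group: the least cardinality of a
finite generating set. -/
noncomputable def minGen (G : Type) [AddGroup G] : ℕ :=
  sInf { r | ∃ S : Finset G, S.card = r ∧ AddSubgroup.closure (S : Set G) = ⊤ }

/-- `f^τ_α(j) = max ({ i ∈ {1,…,m} : ℓ_i ≥ k_j } ∪ {0})`, with `j` 1-based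
(so `k_j` is `k ⟨j-1⟩` and index `i` is represented by `(i : Fin m)` with value `i+1`). -/
def fTA {n m : ℕ} (k : Fin n → ℕ) (l : Fin m → ℕ) (j : Fin n) : ℕ :=
  (Finset.univ.filter (fun i : Fin m => k j ≤ l i)).sup (fun i => (i : ℕ) + 1)

/-- `u^τ_α = max { j − f^τ_α(j) : 1 ≤ j ≤ n }`. -/
def uTA {n m : ℕ} (k : Fin n → ℕ) (l : Fin m → ℕ) : ℕ :=
  Finset.univ.sup (fun j : Fin n => ((j : ℕ) + 1) - fTA k l j)

/-- Let `p > 2` be a prime, `τ = (k_1,…,k_n)` and `α = (ℓ_1,…,ℓ_m)`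
types with `α ≤ τ`.  For every subgroup `N` of `A(τ) = ∏ j, ℤ/p^{k_j}ℤ` that is
isomorphic to `A(α) = ∏ i, ℤ/p^{ℓ_i}ℤ`, the minimal number of generators of
`A(τ)/N` is at least `u^τ_α`. -/
theorem rank_quotient_ge_uTA
    (p : ℕ) (hp : p.Prime) (hp2 : 2 < p)
    (n m : ℕ) (k : Fin n → ℕ) (l : Fin m → ℕ)
    (hk : Antitone k) (hk1 : ∀ j, 1 ≤ k j)
    (hl : Antitone l) (hl1 : ∀ i, 1 ≤ l i)
    (hmn : m ≤ n) (hle : ∀ i : Fin m, l i ≤ k (Fin.castLE hmn i))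
    (N : AddSubgroup ((j : Fin n) → ZMod (p ^ k j)))
    (hN : Nonempty (N ≃+ ((i : Fin m) → ZMod (p ^ l i)))) :
    uTA k l ≤ minGen (((j : Fin n) → ZMod (p ^ k j)) ⧸ N) := by
  classical
  haveI iz : ∀ t : Fin n, NeZero (p ^ k t) := fun t => ⟨pow_ne_zero _ hp.ne_zero⟩
  haveI izl : ∀ i : Fin m, NeZero (p ^ l i) := fun i => ⟨pow_ne_zero _ hp.ne_zero⟩
  haveI : Finite ((j : Fin n) → ZMod (p ^ k j)) := by infer_instance
  obtain ⟨e⟩ := hN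
  set Q := (((j : Fin n) → ZMod (p ^ k j)) ⧸ N) with hQ
  have hne : { r | ∃ S : Finset Q, S.card = r ∧ AddSubgroup.closure (S : Set Q) = ⊤ }.Nonempty := by
    letI : Fintype Q := Fintype.ofFinite Q
    exact ⟨(Finset.univ : Finset Q).card, Finset.univ, rfl, by simp⟩
  obtain ⟨S, hScard, hStop⟩ := Nat.sInf_mem hne
  set r := minGen Q with hrdef
  have hScard' : S.card = r := hScard
  -- lifts of elements of Q
  have hsur := QuotientAddGroup.mk'_surjective N
  choose gl hgl using fun q : Q => hsur q
  -- representation of arbitrary elements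
  have hrep : ∀ x : (j : Fin n) → ZMod (p ^ k j),
      ∃ ν ∈ N, ∃ cf : Q → ℤ, x = ν + ∑ q ∈ S, cf q • gl q := by
    intro x
    have hx : (QuotientAddGroup.mk' N x) ∈ AddSubgroup.closure (S : Set Q) := by
      rw [hStop]; trivial
    rw [← Submodule.span_int_eq_addSubgroupClosure, Submodule.mem_toAddSubgroup] at hx
    obtain ⟨cf, -, hcf⟩ := Submodule.mem_span_finset.mp hx
    refine ⟨x - ∑ q ∈ S, cf q • gl q, ?_, cf, by abel⟩
    rw [← QuotientAddGroup.ker_mk' N, AddMonoidHom.mem_ker, map_sub, map_sum]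
    simp only [map_zsmul, hgl]
    rw [hcf, sub_self]
  apply Finset.sup_le
  intro j _
  have hs1 : 1 ≤ k j := hk1 j
  set s := k j with hsdef
  set A := (sm (p ^ (s - 1)) ((j : Fin n) → ZMod (p ^ k j))).range with hA
  set B := (sm (p ^ s) ((j : Fin n) → ZMod (p ^ k j))).range with hB
  set tN := N.map (sm (p ^ (s - 1)) ((j : Fin n) → ZMod (p ^ k j))) with htN
  set sN := N.map (sm (p ^ s) ((j : Fin n) → ZMod (p ^ k j))) with hsN
  set C' := tN ⊔ B with hC'
  have hpse : p ^ (s - 1) * p = p ^ s := by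
    rw [← pow_succ]; congr 1; omega
  have hBA : B ≤ A := by
    rintro y ⟨x, rfl⟩
    exact ⟨p • x, by rw [sm_apply, sm_apply, smul_smul, hpse]⟩
  have htA : tN ≤ A := by
    rintro y hy
    obtain ⟨x, hxN, rfl⟩ := AddSubgroup.mem_map.mp hy
    exact ⟨x, rfl⟩
  have hst : sN ≤ tN := by
    rintro y hy
    obtain ⟨x, hxN, rfl⟩ := AddSubgroup.mem_map.mp hy
    exact AddSubgroup.mem_map.mpr ⟨p • x, AddSubgroup.nsmul_mem N hxN p,
      by rw [sm_apply, sm_apply, smul_smul, hpse]⟩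
  have hsB : sN ≤ B := by
    rintro y hy
    obtain ⟨x, hxN, rfl⟩ := AddSubgroup.mem_map.mp hy
    exact ⟨x, rfl⟩
  have hCA : C' ≤ A := sup_le htA hBA
  -- step 2 : card C' * card sN ≤ card tN * card B
  let φ : ↥tN × ↥B →+ ((j : Fin n) → ZMod (p ^ k j)) :=
    (tN.subtype.comp (AddMonoidHom.fst _ _)) + (B.subtype.comp (AddMonoidHom.snd _ _))
  have hφ : ∀ z : ↥tN × ↥B, φ z = ↑z.1 + ↑z.2 := fun z => rfl
  have hφrange : φ.range = C' := by
    ext x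
    rw [AddMonoidHom.mem_range, hC', AddSubgroup.mem_sup]
    constructor
    · rintro ⟨z, rfl⟩; exact ⟨z.1, z.1.2, z.2, z.2.2, (hφ z).symm⟩
    · rintro ⟨y, hy, z, hz, rfl⟩; exact ⟨(⟨y, hy⟩, ⟨z, hz⟩), hφ _⟩
  have hcard2 : Nat.card C' * Nat.card sN ≤ Nat.card tN * Nat.card B := by
    have h1 := card_eq_range_mul_ker φ
    rw [Nat.card_prod] at h1
    have hinj : Function.Injective (fun w : ↥sN =>
        (⟨(⟨↑w, hst w.2⟩, ⟨-↑w, neg_mem (hsB w.2)⟩), by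
          rw [AddMonoidHom.mem_ker, hφ]; simp⟩ : ↥φ.ker)) := by
      intro w1 w2 hw
      apply Subtype.ext
      exact congrArg (fun z : ↥φ.ker =>
        ((z : ↥tN × ↥B).1 : ((j : Fin n) → ZMod (p ^ k j)))) hw
    have hle2 : Nat.card sN ≤ Nat.card φ.ker := Nat.card_le_card_of_injective _ hinj
    calc Nat.card C' * Nat.card sN ≤ Nat.card C' * Nat.card φ.ker :=
          Nat.mul_le_mul_left _ hle2
      _ = Nat.card φ.range * Nat.card φ.ker := by rw [hφrange]
      _ = Nat.card tN * Nat.card B := h1.symm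
  -- step 1 : card A ≤ card C' * p ^ r
  have hcard1 : Nat.card A ≤ Nat.card C' * p ^ r := by
    have hp0 : (0 : ℤ) < (p : ℤ) := by exact_mod_cast hp.pos
    let w : ↥S → ((j : Fin n) → ZMod (p ^ k j)) := fun q => p ^ (s - 1) • gl ↑q
    have hwA : ∀ q : ↥S, w q ∈ A := fun q => ⟨gl ↑q, rfl⟩
    let F : ↥C' × (↥S → Fin p) → ↥A := fun z =>
      ⟨↑z.1 + ∑ q ∈ S.attach, ((z.2 q : ℕ)) • w q,
        add_mem (hCA z.1.2) (AddSubgroup.sum_mem _ fun q _ =>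
          AddSubgroup.nsmul_mem _ (hwA q) _)⟩
    have hFsur : Function.Surjective F := by
      rintro ⟨a, ha⟩
      obtain ⟨x, hx⟩ := AddMonoidHom.mem_range.mp ha
      obtain ⟨ν, hν, cf, hxe⟩ := hrep x
      have key : ∀ q : ↥S, p ^ s • ((cf ↑q / p) • gl ↑q) + ((cf ↑q % ↑p).toNat) • w q
          = p ^ (s - 1) • (cf ↑q • gl ↑q) := by
        intro q
        have h0 : (0 : ℤ) ≤ cf ↑q % ↑p := Int.emod_nonneg _ hp0.ne'
        have hz : (((cf ↑q % ↑p).toNat : ℕ) : ℤ) = cf ↑q % ↑p := Int.toNat_of_nonneg h0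
        show p ^ s • ((cf ↑q / p) • gl ↑q) + ((cf ↑q % ↑p).toNat) • (p ^ (s - 1) • gl ↑q)
          = p ^ (s - 1) • (cf ↑q • gl ↑q)
        rw [← natCast_zsmul _ (p ^ s), ← natCast_zsmul _ ((cf ↑q % ↑p).toNat),
          ← natCast_zsmul _ (p ^ (s - 1)), ← natCast_zsmul _ (p ^ (s - 1)),
          smul_smul, smul_smul, smul_smul, ← add_smul]
        congr 1
        push_cast [hz]
        rw [show ((p : ℤ)) ^ s = (p : ℤ) ^ (s - 1) * p by rw [← pow_succ]; congr 1; omega]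
        linear_combination ((p : ℤ) ^ (s - 1)) * (Int.mul_ediv_add_emod (cf ↑q) p)
      refine ⟨(⟨p ^ (s - 1) • ν + p ^ s • (∑ q ∈ S.attach, (cf ↑q / p) • gl ↑q), ?_⟩,
        fun q => ⟨(cf ↑q % ↑p).toNat, ?_⟩), ?_⟩
      · apply add_mem
        · exact (le_sup_left : tN ≤ C') (AddSubgroup.mem_map.mpr ⟨ν, hν, rfl⟩)
        · exact (le_sup_right : B ≤ C') ⟨_, rfl⟩
      · have h1 : 0 ≤ cf ↑q % ↑p := Int.emod_nonneg _ hp0.ne'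
        have h2 : cf ↑q % ↑p < ↑p := Int.emod_lt_of_pos _ hp0
        omega
      · apply Subtype.ext
        show p ^ (s - 1) • ν + p ^ s • (∑ q ∈ S.attach, (cf ↑q / p) • gl ↑q)
            + ∑ q ∈ S.attach, ((cf ↑q % ↑p).toNat) • w q = a
        rw [← hx, sm_apply, hxe]
        conv_rhs => rw [smul_add, Finset.smul_sum,
          ← Finset.sum_attach S (fun q => p ^ (s - 1) • (cf q • gl q))]
        rw [Finset.smul_sum, add_assoc, ← Finset.sum_add_distrib]
        congr 1
        exact Finset.sum_congr rfl fun q _ => key q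
    have hcards := Nat.card_le_card_of_surjective F hFsur
    rw [Nat.card_prod, Nat.card_fun, Nat.card_eq_fintype_card (α := Fin p), Fintype.card_fin,
      Nat.card_eq_fintype_card (α := ↥S), Fintype.card_coe, hScard'] at hcards
    exact hcards
  -- combine
  have main : Nat.card A * Nat.card sN ≤ (Nat.card tN * Nat.card B) * p ^ r :=
    calc Nat.card A * Nat.card sN ≤ (Nat.card C' * p ^ r) * Nat.card sN :=
        Nat.mul_le_mul_right _ hcard1
      _ = (Nat.card C' * Nat.card sN) * p ^ r := by ring
      _ ≤ (Nat.card tN * Nat.card B) * p ^ r := Nat.mul_le_mul_right _ hcard2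
  -- cardinality computations
  have hAcard : Nat.card A = p ^ (∑ t, (k t - min (k t) (s - 1))) := by
    rw [hA, card_range_sm_pi, ← Finset.prod_pow_eq_pow_sum]
    exact Finset.prod_congr rfl fun t _ => card_range_sm_zmod_pp p (s - 1) (k t) hp
  have hBcard : Nat.card B = p ^ (∑ t, (k t - min (k t) s)) := by
    rw [hB, card_range_sm_pi, ← Finset.prod_pow_eq_pow_sum]
    exact Finset.prod_congr rfl fun t _ => card_range_sm_zmod_pp p s (k t) hp
  have htcard : Nat.card tN = p ^ (∑ i, (l i - min (l i) (s - 1))) := by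
    rw [htN, card_map_sm _ N e, card_range_sm_pi, ← Finset.prod_pow_eq_pow_sum]
    exact Finset.prod_congr rfl fun i _ => card_range_sm_zmod_pp p (s - 1) (l i) hp
  have hscard : Nat.card sN = p ^ (∑ i, (l i - min (l i) s)) := by
    rw [hsN, card_map_sm _ N e, card_range_sm_pi, ← Finset.prod_pow_eq_pow_sum]
    exact Finset.prod_congr rfl fun i _ => card_range_sm_zmod_pp p s (l i) hp
  rw [hAcard, hBcard, htcard, hscard, ← pow_add, mul_assoc, ← pow_add, ← pow_add] at main
  have hfinal := (Nat.pow_le_pow_iff_right hp.one_lt).mp main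
  -- combinatorial identities
  have hksum : ∑ t, (k t - min (k t) (s - 1))
      = (∑ t, (k t - min (k t) s)) + (Finset.univ.filter (fun t => s ≤ k t)).card := by
    rw [Finset.card_filter, ← Finset.sum_add_distrib]
    exact Finset.sum_congr rfl fun t _ => by
      by_cases h : s ≤ k t <;> simp only [h, if_true, if_false] <;> omega
  have hlsum : ∑ i, (l i - min (l i) (s - 1))
      = (∑ i, (l i - min (l i) s)) + (Finset.univ.filter (fun i : Fin m => s ≤ l i)).card := by
    rw [Finset.card_filter, ← Finset.sum_add_distrib]
    exact Finset.sum_congr rfl fun i _ => by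
      by_cases h : s ≤ l i <;> simp only [h, if_true, if_false] <;> omega
  have hc1 : (j : ℕ) + 1 ≤ (Finset.univ.filter (fun t => s ≤ k t)).card := by
    have hsub : Finset.Iic j ⊆ Finset.univ.filter (fun t => s ≤ k t) := fun t ht =>
      Finset.mem_filter.mpr ⟨Finset.mem_univ _, hk (Finset.mem_Iic.mp ht)⟩
    calc (j : ℕ) + 1 = (Finset.Iic j).card := (Fin.card_Iic j).symm
      _ ≤ _ := Finset.card_le_card hsub
  have hc2 : (Finset.univ.filter (fun i : Fin m => s ≤ l i)).card ≤ fTA k l j := by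
    have : fTA k l j = (Finset.univ.filter (fun i : Fin m => s ≤ l i)).sup
        (fun i => (i : ℕ) + 1) := rfl
    rw [this]
    exact card_le_sup_succ _
  omega
end

section
/- Let p > 2 be a prime, e ≥ 1 an integer, and c_1,…,c_N any finite list (possibly empty) of integers with 1 ≤ c_t ≤ e for each t. Then there exist a nonnegative integer w and integers a_1,…,a_e with 0 ≤ a_j ≤ p−1 such that Σ_{t=1}^N (p^e − p^{e−c_t}) = 2·w·p^e + Σ_{j=1}^e a_j (p^e − p^{e−j}). Equivalently, Σ_{t=1}^N (1 − p^{−c_t}) = 2w + Σ_{j=1}^e a_j (1 − p^{−j}). -/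
private lemma sum_update_term (e : ℕ) (a : Fin e → ℕ) (i : Fin e) (v : ℕ) (t : Fin e → ℤ) :
    ∑ j : Fin e, ((Function.update a i v j : ℕ) : ℤ) * t j
      = ∑ j : Fin e, (a j : ℤ) * t j - (a i : ℤ) * t i + (v : ℤ) * t i := by
  have h : (fun j => ((Function.update a i v j : ℕ) : ℤ) * t j)
      = Function.update (fun j => (a j : ℤ) * t j) i ((v : ℤ) * t i) := by
    funext j
    by_cases hj : j = i
    · subst hj; simp
    · simp [Function.update_of_ne hj]
  rw [h, Finset.sum_update_of_mem (Finset.mem_univ i)]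
  rw [← Finset.sum_erase_add _ _ (Finset.mem_univ i), Finset.sdiff_singleton_eq_erase]
  ring

private lemma add_one_term (p : ℕ) (hp2 : 2 < p) (hodd : Odd p) (e : ℕ) :
    ∀ c : ℕ, 1 ≤ c → c ≤ e → ∀ (V : ℤ) (w : ℕ) (a : Fin e → ℕ),
      (∀ j, a j ≤ p - 1) →
      V = 2 * (w : ℤ) * (p : ℤ) ^ e +
          ∑ j : Fin e, (a j : ℤ) * ((p : ℤ) ^ e - (p : ℤ) ^ (e - ((j : ℕ) + 1))) →
      ∃ (w' : ℕ) (a' : Fin e → ℕ), (∀ j, a' j ≤ p - 1) ∧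
        V + ((p : ℤ) ^ e - (p : ℤ) ^ (e - c)) =
          2 * (w' : ℤ) * (p : ℤ) ^ e +
            ∑ j : Fin e, (a' j : ℤ) * ((p : ℤ) ^ e - (p : ℤ) ^ (e - ((j : ℕ) + 1))) := by
  intro c
  induction c with
  | zero => intro h; omega
  | succ c ih =>
    intro _ hce V w a ha hV
    have hce' : c < e := by omega
    set i : Fin e := ⟨c, hce'⟩ with hi
    have hit : (e : ℕ) - ((i : ℕ) + 1) = e - (c + 1) := rfl
    by_cases h : a i + 1 ≤ p - 1
    · -- no carry needed
      refine ⟨w, Function.update a i (a i + 1), ?_, ?_⟩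
      · intro j
        by_cases hj : j = i
        · subst hj; simpa using h
        · rw [Function.update_of_ne hj]; exact ha j
      · rw [sum_update_term, hV]
        push_cast [hit]
        ring
    · -- carry: a i = p - 1
      have hai : a i = p - 1 := by have := ha i; omega
      obtain ⟨m, hm⟩ := hodd
      have hm2 : (p : ℤ) - 1 = 2 * m := by push_cast [hm]; ring
      -- key identity: p * (p^e - p^(e-(c+1))) = (p-1)*p^e + (p^e - p^(e-c))
      have hkey : (p : ℤ) * ((p : ℤ) ^ e - (p : ℤ) ^ (e - (c + 1)))
          = ((p : ℤ) - 1) * (p : ℤ) ^ e + ((p : ℤ) ^ e - (p : ℤ) ^ (e - c)) := by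
        have h1 : (p : ℤ) * (p : ℤ) ^ (e - (c + 1)) = (p : ℤ) ^ (e - c) := by
          rw [← pow_succ']
          congr 1
          omega
        have h2 : (p : ℤ) * (p : ℤ) ^ e = (p : ℤ) ^ e + ((p : ℤ) - 1) * (p : ℤ) ^ e := by ring
        rw [mul_sub, h1, h2]; ring
      set a' : Fin e → ℕ := Function.update a i 0 with ha'
      set V₁ : ℤ := 2 * ((w + m : ℕ) : ℤ) * (p : ℤ) ^ e +
          ∑ j : Fin e, (a' j : ℤ) * ((p : ℤ) ^ e - (p : ℤ) ^ (e - ((j : ℕ) + 1))) with hV₁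
      have ha'le : ∀ j, a' j ≤ p - 1 := by
        intro j
        by_cases hj : j = i
        · subst hj; simp [ha']
        · rw [ha', Function.update_of_ne hj]; exact ha j
      have hstep : V + ((p : ℤ) ^ e - (p : ℤ) ^ (e - (c + 1)))
          = V₁ + ((p : ℤ) ^ e - (p : ℤ) ^ (e - c)) := by
        rw [hV₁, ha', sum_update_term, hV]
        have : ((p - 1 : ℕ) : ℤ) = (p : ℤ) - 1 := by omega
        rw [hai, hit, this]
        have hexpand : ((p : ℤ) - 1) * ((p : ℤ) ^ e - (p : ℤ) ^ (e - (c + 1)))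
            + ((p : ℤ) ^ e - (p : ℤ) ^ (e - (c + 1)))
            = (p : ℤ) * ((p : ℤ) ^ e - (p : ℤ) ^ (e - (c + 1))) := by ring
        push_cast
        rw [hm2]
        linear_combination hkey + (p:ℤ)^(e-(c+1)) * hm2
      rcases Nat.eq_zero_or_pos c with hc0 | hc0
      · -- c = 0 : the extra term is zero
        subst hc0
        refine ⟨w + m, a', ha'le, ?_⟩
        rw [hstep, hV₁]
        simp
      · -- recurse
        obtain ⟨w', a'', ha''le, heq⟩ := ih hc0 (by omega) V₁ (w + m) a' ha'le rfl
        exact ⟨w', a'', ha''le, by rw [hstep, heq]⟩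

/-- Let `p > 2` be a prime, `e ≥ 1`, and `c 0, …, c (N-1)` a finite
(possibly empty) list of integers with `1 ≤ c t ≤ e`.  Then there exist `w ∈ ℕ` and
`a 1, …, a e ∈ {0,…,p−1}` with
`Σ_t (p^e − p^{e−c t}) = 2·w·p^e + Σ_{j=1}^e a_j (p^e − p^{e−j})`
(the identity `Σ_t (1 − p^{−c_t}) = 2w + Σ_j a_j (1 − p^{−j})` multiplied by `p^e`). -/
theorem sum_one_sub_inv_pow_reduction
    (p : ℕ) (hp : p.Prime) (hp2 : 2 < p) (e : ℕ) (he : 1 ≤ e)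
    (N : ℕ) (c : Fin N → ℕ) (hc : ∀ t, 1 ≤ c t ∧ c t ≤ e) :
    ∃ (w : ℕ) (a : Fin e → ℕ), (∀ j, a j ≤ p - 1) ∧
      (∑ t : Fin N, ((p : ℤ) ^ e - (p : ℤ) ^ (e - c t))) =
        2 * (w : ℤ) * (p : ℤ) ^ e +
          ∑ j : Fin e, (a j : ℤ) * ((p : ℤ) ^ e - (p : ℤ) ^ (e - ((j : ℕ) + 1))) := by
  have hodd : Odd p := hp.odd_of_ne_two (by omega)
  induction N with
  | zero => exact ⟨0, fun _ => 0, fun j => Nat.zero_le _, by simp⟩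
  | succ n ihn =>
    obtain ⟨w, a, ha, hV⟩ := ihn (fun t => c t.succ) (fun t => hc t.succ)
    obtain ⟨w', a', ha', heq⟩ := add_one_term p hp2 hodd e (c 0) (hc 0).1 (hc 0).2
      _ w a ha hV
    refine ⟨w', a', ha', ?_⟩
    rw [Fin.sum_univ_succ, add_comm]
    exact heq
end
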